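/- arXiv:alg-geom/9601022 — 3 statements merged into one kernel-verified Lean document; each statement's English description precedes it below -/
import Mathlib

section
/- Fix an integer n ≥ 3 and let τ be a column tabloid for the universal three-row diagram D₃ which is NOT maximally degenerate, i.e. not of the form τ({1}) = τ({2}) = τ({3}) = {i}, τ({1,2}) = τ({2,3}) = τ({1,3}) = {i,j}, τ({1,2,3}) = {i,j,k} for distinct i, j, k. Then the sum of d_{ab}(τ) over all ordered pairs of distinct a, b ∈ {1,…,n} equals 3n − 3. -/
/-- Nonempty subsets of `{1,2,3}` (modeled as `Fin 3`): the columns of the universal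
three-row diagram `D₃`. -/
abbrev NE3 : Type := {C : Finset (Fin 3) // C.Nonempty}

/-- A column tabloid for the universal three-row diagram `D₃`: an assignment of a
subset `τ(C) ⊆ {1,…,n}` with `|τ(C)| = |C|` to each nonempty `C ⊆ {1,2,3}`, monotone
with respect to inclusion. -/
def IsTabloid (n : ℕ) (τ : NE3 → Finset (Fin n)) : Prop :=
  (∀ C : NE3, (τ C).card = C.1.card) ∧
  ∀ C C' : NE3, C.1 ⊆ C'.1 → τ C ⊆ τ C'

/-- The graph whose vertices are the nonempty columns `C` of `D₃` with
`a ∈ τ(C)` and `b ∉ τ(C)`, two columns being adjacent iff one strictly contains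
the other. -/
def dGraph (n : ℕ) (τ : NE3 → Finset (Fin n)) (a b : Fin n) :
    SimpleGraph {C : NE3 // a ∈ τ C ∧ b ∉ τ C} where
  Adj C C' := C.1.1 ⊂ C'.1.1 ∨ C'.1.1 ⊂ C.1.1
  symm := ⟨fun C C' h => h.symm⟩
  loopless := ⟨fun C h => by
    rcases h with h | h <;> exact (lt_irrefl C.1.1 h)⟩

/-- `d_{ab}(τ)`: the number of connected components of the graph `dGraph`. -/
noncomputable def dval (n : ℕ) (τ : NE3 → Finset (Fin n)) (a b : Fin n) : ℕ :=
  Nat.card (dGraph n τ a b).ConnectedComponent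

/-- `τ` is the maximally degenerate tabloid `τ_{ijk}`:
`τ({1}) = τ({2}) = τ({3}) = {i}`, `τ({1,2}) = τ({2,3}) = τ({1,3}) = {i,j}`,
`τ({1,2,3}) = {i,j,k}` for distinct `i, j, k`. -/
def IsMaxDeg (n : ℕ) (τ : NE3 → Finset (Fin n)) (i j k : Fin n) : Prop :=
  i ≠ j ∧ j ≠ k ∧ i ≠ k ∧
  τ ⟨{0}, Finset.singleton_nonempty 0⟩ = {i} ∧
  τ ⟨{1}, Finset.singleton_nonempty 1⟩ = {i} ∧
  τ ⟨{2}, Finset.singleton_nonempty 2⟩ = {i} ∧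
  τ ⟨{0, 1}, Finset.insert_nonempty 0 {1}⟩ = {i, j} ∧
  τ ⟨{1, 2}, Finset.insert_nonempty 1 {2}⟩ = {i, j} ∧
  τ ⟨{0, 2}, Finset.insert_nonempty 0 {2}⟩ = {i, j} ∧
  τ ⟨{0, 1, 2}, Finset.insert_nonempty 0 {1, 2}⟩ = {i, j, k}

open scoped Classical in
/-- `e_{ab}(τ)`: equal to `d_{ab}(τ)`, except that for a maximally degenerate tabloid
`τ_{ijk}` one sets `e_{ik}(τ_{ijk}) = 0`. -/
noncomputable def eval' (n : ℕ) (τ : NE3 → Finset (Fin n)) (a b : Fin n) : ℕ :=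
  if ∃ j : Fin n, IsMaxDeg n τ a j b then 0 else dval n τ a b

/-!
Let `T = τ({1,2,3})`; it has three elements and contains every `τ(C)`. If `a ∉ T` the graph of
`d_{ab}` is empty, and if `a ∈ T`, `b ∉ T` the top column is a vertex adjacent to all others, so
`d_{ab} = 1`; together this gives `3(n - 3)`. It remains to show `∑_{a ≠ b ∈ T} d_{ab} = 6`.
Pulling `τ` back along `Fin 3 ≃ T` turns this into a statement about tabloids on `Fin 3`, which are
determined by their values on singletons and pairs, and it is checked on all `3^6` of them.

Conceptually: without the top column the graph is an induced subgraph of the hexagon formed by the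
singletons and pairs, so it has `#vertices - #edges` components unless it is the whole hexagon,
which happens only for a maximally degenerate `τ`; summed over `a ≠ b` in `T` there are 12
vertices and 6 edges.
-/

open Finset

namespace Finset

variable {α β : Type*}

theorem offDiag_map (f : α ↪ β) (s : Finset α) :
    (s.map f).offDiag = s.offDiag.map (f.prodMap f) := by
  ext ⟨x, y⟩
  simp only [mem_offDiag, mem_map, Function.Embedding.coe_prodMap, Prod.exists, Prod.map,
    Prod.mk.injEq]
  constructor
  · rintro ⟨⟨a, ha, rfl⟩, ⟨b, hb, rfl⟩, hab⟩
    exact ⟨a, b, ⟨ha, hb, fun h => hab (h ▸ rfl)⟩, rfl, rfl⟩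
  · rintro ⟨a, b, ⟨ha, hb, hab⟩, rfl, rfl⟩
    exact ⟨⟨a, ha, rfl⟩, ⟨b, hb, rfl⟩, f.injective.ne hab⟩

theorem sum_offDiag_univ_eq_add [Fintype α] [DecidableEq α] {M : Type*} [AddCommMonoid M]
    (T : Finset α) {f : α × α → M} (hf : ∀ p : α × α, p.1 ∉ T → f p = 0) :
    ∑ p ∈ univ.offDiag, f p = ∑ p ∈ T.offDiag, f p + ∑ p ∈ T ×ˢ Tᶜ, f p := by
  have hdisj : Disjoint T.offDiag (T ×ˢ Tᶜ) := by
    simp only [disjoint_left, mem_offDiag, mem_product, mem_compl]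
    tauto
  rw [← sum_union hdisj]
  refine (sum_subset (fun p hp => ?_) fun p hp hpT => hf p fun h1 => hpT ?_).symm
  · simp only [mem_union, mem_offDiag, mem_product, mem_compl, mem_univ, true_and] at hp ⊢
    grind
  · simp only [mem_union, mem_offDiag, mem_product, mem_compl, mem_univ, true_and] at hp ⊢
    grind

end Finset

instance (n : ℕ) (τ : NE3 → Finset (Fin n)) : Decidable (IsTabloid n τ) :=
  inferInstanceAs (Decidable (_ ∧ _))

instance (n : ℕ) (τ : NE3 → Finset (Fin n)) (i j k : Fin n) : Decidable (IsMaxDeg n τ i j k) :=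
  inferInstanceAs (Decidable (_ ∧ _))

instance (n : ℕ) (τ : NE3 → Finset (Fin n)) (a b : Fin n) :
    DecidableRel (dGraph n τ a b).Adj := fun C C' =>
  inferInstanceAs (Decidable (C.1.1 ⊂ C'.1.1 ∨ C'.1.1 ⊂ C.1.1))

def NE3.top : NE3 := ⟨univ, univ_nonempty⟩

section Top

variable {n : ℕ} {τ : NE3 → Finset (Fin n)}

theorem IsTabloid.subset_top (hτ : IsTabloid n τ) (C : NE3) : τ C ⊆ τ NE3.top :=
  hτ.2 C NE3.top (subset_univ _)

theorem IsTabloid.card_top (hτ : IsTabloid n τ) : (τ NE3.top).card = 3 :=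
  hτ.1 NE3.top

theorem dval_eq_zero_of_notMem_top (hτ : IsTabloid n τ) {a : Fin n} (ha : a ∉ τ NE3.top)
    (b : Fin n) : dval n τ a b = 0 := by
  have : IsEmpty {C : NE3 // a ∈ τ C ∧ b ∉ τ C} := ⟨fun C => ha (hτ.subset_top C.1 C.2.1)⟩
  exact Nat.card_of_isEmpty

theorem dGraph_connected_of_mem_top {a b : Fin n}
    (ha : a ∈ τ NE3.top) (hb : b ∉ τ NE3.top) : (dGraph n τ a b).Connected := by
  let top : {C : NE3 // a ∈ τ C ∧ b ∉ τ C} := ⟨NE3.top, ha, hb⟩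
  refine (SimpleGraph.connected_iff_exists_forall_reachable _).2 ⟨top, fun C => ?_⟩
  by_cases hC : C.1.1 = univ
  · rw [show C = top from Subtype.ext (Subtype.ext hC)]
  · exact SimpleGraph.Adj.reachable (Or.inr (ssubset_univ_iff.2 hC))

theorem dval_eq_one_of_mem_top {a b : Fin n}
    (ha : a ∈ τ NE3.top) (hb : b ∉ τ NE3.top) : dval n τ a b = 1 := by
  have hconn := dGraph_connected_of_mem_top ha hb
  have := hconn.preconnected.subsingleton_connectedComponent
  have := hconn.nonempty.map (dGraph n τ a b).connectedComponentMk
  exact Nat.card_eq_one_iff_unique.2 ⟨inferInstance, inferInstance⟩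

end Top

section Comap

variable {m n : ℕ} (g : Fin m → Fin n) (τ : NE3 → Finset (Fin n))

def comapTabloid (C : NE3) : Finset (Fin m) := {t | g t ∈ τ C}

variable {g τ}

@[simp]
theorem mem_comapTabloid {C : NE3} {t : Fin m} : t ∈ comapTabloid g τ C ↔ g t ∈ τ C := by
  simp [comapTabloid]

theorem image_comapTabloid (hτg : ∀ C, ↑(τ C) ⊆ Set.range g) (C : NE3) :
    (comapTabloid g τ C).image g = τ C := by
  ext x
  simp only [mem_image, mem_comapTabloid]
  constructor
  · rintro ⟨t, ht, rfl⟩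
    exact ht
  · intro hx
    obtain ⟨t, rfl⟩ := hτg C hx
    exact ⟨t, hx, rfl⟩

theorem IsTabloid.comap (hg : Function.Injective g) (hτg : ∀ C, ↑(τ C) ⊆ Set.range g)
    (hτ : IsTabloid n τ) : IsTabloid m (comapTabloid g τ) := by
  refine ⟨fun C => ?_, fun C C' hCC' t ht => ?_⟩
  · rw [← hτ.1 C, ← image_comapTabloid hτg C, card_image_of_injective _ hg]
  · exact mem_comapTabloid.2 (hτ.2 C C' hCC' (mem_comapTabloid.1 ht))

theorem IsMaxDeg.of_comap (hg : Function.Injective g) (hτg : ∀ C, ↑(τ C) ⊆ Set.range g)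
    {i j k : Fin m} (h : IsMaxDeg m (comapTabloid g τ) i j k) :
    IsMaxDeg n τ (g i) (g j) (g k) := by
  obtain ⟨hij, hjk, hik, h0, h1, h2, h01, h12, h02, h012⟩ := h
  refine ⟨hg.ne hij, hg.ne hjk, hg.ne hik, ?_, ?_, ?_, ?_, ?_, ?_, ?_⟩ <;>
    rw [← image_comapTabloid hτg] <;> simp [*]

theorem dval_comapTabloid (a b : Fin m) :
    dval m (comapTabloid g τ) a b = dval n τ (g a) (g b) := by
  let e : dGraph n τ (g a) (g b) ≃g dGraph m (comapTabloid g τ) a b :=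
    ⟨Equiv.subtypeEquivRight fun C => by simp only [mem_comapTabloid], Iff.rfl⟩
  exact (Nat.card_congr e.connectedComponentEquiv).symm

end Comap

theorem Finset.fin3_eq_singleton_or_eq_erase_or_eq_univ (C : Finset (Fin 3)) (hC : C.Nonempty) :
    (∃ i, C = {i}) ∨ (∃ k, C = univ.erase k) ∨ C = univ := by
  revert C
  decide

/-- Sends `{i}` to `{s i}`, `univ.erase k` to `univ.erase (m k)` and `univ` to `univ`. -/
def fin3Tabloid (s m : Fin 3 → Fin 3) (C : NE3) : Finset (Fin 3) :=
  if C.1.card = 1 then C.1.image s else (C.1ᶜ.image m)ᶜ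

theorem exists_eq_fin3Tabloid {σ : NE3 → Finset (Fin 3)}
    (hσ : ∀ C : NE3, (σ C).card = C.1.card) : ∃ s m, σ = fin3Tabloid s m := by
  have hpair_ne (k : Fin 3) : (univ.erase k).Nonempty := ⟨k + 1, by simp⟩
  have hsingle (i : Fin 3) : ∃ x, σ ⟨{i}, singleton_nonempty i⟩ = {x} :=
    card_eq_one.1 (hσ _)
  have hpair (k : Fin 3) : ∃ x, σ ⟨univ.erase k, hpair_ne k⟩ = univ.erase x := by
    obtain ⟨x, hx⟩ := card_eq_one.1 (show (σ ⟨univ.erase k, hpair_ne k⟩)ᶜ.card = 1 by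
      rw [card_compl, hσ]; simp)
    exact ⟨x, compl_injective (by rw [hx, ← compl_singleton, compl_compl])⟩
  choose s hs using hsingle
  choose m hm using hpair
  refine ⟨s, m, funext fun ⟨C, hC⟩ => ?_⟩
  rcases C.fin3_eq_singleton_or_eq_erase_or_eq_univ hC with ⟨i, rfl⟩ | ⟨k, rfl⟩ | rfl
  · simp [fin3Tabloid, hs]
  · simp [fin3Tabloid, hm, compl_erase, compl_singleton]
  · simp [fin3Tabloid, eq_univ_of_card _ (hσ ⟨univ, hC⟩)]

theorem sum_card_connectedComponent_fin3Tabloid (s m : Fin 3 → Fin 3)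
    (hσ : IsTabloid 3 (fin3Tabloid s m)) (hnd : ¬∃ i j k, IsMaxDeg 3 (fin3Tabloid s m) i j k) :
    ∑ p ∈ univ.offDiag,
      Fintype.card (dGraph 3 (fin3Tabloid s m) p.1 p.2).ConnectedComponent = 6 := by
  revert s m
  decide +kernel

theorem sum_dval_fin3 {σ : NE3 → Finset (Fin 3)} (hσ : IsTabloid 3 σ)
    (hnd : ¬∃ i j k, IsMaxDeg 3 σ i j k) : ∑ p ∈ univ.offDiag, dval 3 σ p.1 p.2 = 6 := by
  obtain ⟨s, m, rfl⟩ := exists_eq_fin3Tabloid hσ.1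
  simp only [dval, Nat.card_eq_fintype_card]
  exact sum_card_connectedComponent_fin3Tabloid s m hσ hnd

theorem IsTabloid.sum_dval_offDiag_top {n : ℕ} {τ : NE3 → Finset (Fin n)} (hτ : IsTabloid n τ)
    (hnd : ¬∃ i j k, IsMaxDeg n τ i j k) :
    ∑ p ∈ (τ NE3.top).offDiag, dval n τ p.1 p.2 = 6 := by
  set g := (τ NE3.top).orderEmbOfFin hτ.card_top
  have hg : Function.Injective g := g.injective
  have hτg (C : NE3) : ↑(τ C) ⊆ Set.range g := by
    rw [range_orderEmbOfFin]
    exact coe_subset.2 (hτ.subset_top C)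
  rw [← map_orderEmbOfFin_univ _ hτ.card_top, offDiag_map, sum_map]
  simp only [Function.Embedding.coe_prodMap, Prod.map_fst, Prod.map_snd, ← dval_comapTabloid]
  exact sum_dval_fin3 (hτ.comap hg hτg) fun ⟨i, j, k, h⟩ => hnd ⟨_, _, _, h.of_comap hg hτg⟩

/-- For any column tabloid `τ` for the universal three-row diagram `D₃` which is not
maximally degenerate, the sum of `d_{ab}(τ)` over all ordered pairs of distinct
`a, b ∈ {1,…,n}` equals `3n − 3`. -/
theorem dval_sum_of_not_maxDeg (n : ℕ) (hn : 3 ≤ n)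
    (τ : NE3 → Finset (Fin n)) (hτ : IsTabloid n τ)
    (h : ¬ ∃ i j k : Fin n, IsMaxDeg n τ i j k) :
    ∑ p ∈ (Finset.univ : Finset (Fin n)).offDiag, dval n τ p.1 p.2 = 3 * n - 3 := by
  have hzero (p : Fin n × Fin n) (hp : p.1 ∉ τ NE3.top) : dval n τ p.1 p.2 = 0 :=
    dval_eq_zero_of_notMem_top hτ hp p.2
  have hone : ∀ p ∈ τ NE3.top ×ˢ (τ NE3.top)ᶜ, dval n τ p.1 p.2 = 1 := fun p hp =>
    dval_eq_one_of_mem_top (mem_product.1 hp).1 (mem_compl.1 (mem_product.1 hp).2)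
  rw [sum_offDiag_univ_eq_add _ hzero, hτ.sum_dval_offDiag_top h, sum_congr rfl hone,
    sum_const, card_product, card_compl, hτ.card_top, Fintype.card_fin, smul_eq_mul, mul_one]
  omega
end

section
/- In the polynomial ring R = ℂ[a₁, a₂, a₃, b₁, b₂, b₃, c₁, c₂, c₃, d₁, d₂, d₃] (i.e. MvPolynomial (Fin 12) ℂ), the ideal I generated by the six incidence polynomials c₂ + a₁d₂ + b₁, c₃ + a₁d₃ + b₁, c₁ + a₂d₁ + b₂, c₃ + a₂d₃ + b₂, c₁ + a₃d₁ + b₃, c₂ + a₃d₂ + b₃ is a prime ideal. -/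
/-!
The first five incidence equations are linear in `b₂, b₃, c₁, c₂, c₃` and can be solved for
them; substituting the solution gives an endomorphism `φ` of the polynomial ring that fixes the
remaining coordinates and is the identity modulo `I`. Hence `I = φ⁻¹ (φ I)`, and `φ I` is
generated by the image of the sixth equation, the quadric
`q = (a₂ - a₃) d₁ + (a₃ - a₁) d₂ + (a₁ - a₂) d₃`. This `q` is linear in `d₁` with coefficient
`a₂ - a₃`, a prime not dividing the rest, so it is irreducible and `I` is the preimage of the
prime ideal `(q)`.
-/

open MvPolynomial

/-- The incidence ideal of the space of triangles `I₃,₃` in affine coordinates.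
The variables of `MvPolynomial (Fin 12) ℂ` are identified as
`0 ↦ a₁`, `1 ↦ a₂`, `2 ↦ a₃`, `3 ↦ b₁`, `4 ↦ b₂`, `5 ↦ b₃`,
`6 ↦ c₁`, `7 ↦ c₂`, `8 ↦ c₃`, `9 ↦ d₁`, `10 ↦ d₂`, `11 ↦ d₃`. -/
noncomputable def incidenceIdeal : Ideal (MvPolynomial (Fin 12) ℂ) :=
  Ideal.span
    { X 7 + X 0 * X 10 + X 3,   -- c₂ + a₁ d₂ + b₁
      X 8 + X 0 * X 11 + X 3,   -- c₃ + a₁ d₃ + b₁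
      X 6 + X 1 * X 9 + X 4,    -- c₁ + a₂ d₁ + b₂
      X 8 + X 1 * X 11 + X 4,   -- c₃ + a₂ d₃ + b₂
      X 6 + X 2 * X 9 + X 5,    -- c₁ + a₃ d₁ + b₃
      X 7 + X 2 * X 10 + X 5 }  -- c₂ + a₃ d₂ + b₃

theorem Ideal.comap_map_eq_self_of_sub_mem {A F : Type*} [CommRing A] [FunLike F A A]
    [RingHomClass F A A] {φ : F} {I : Ideal A} (hφ : ∀ a, a - φ a ∈ I) :
    (I.map φ).comap φ = I := by
  have hmap : I.map φ ≤ I :=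
    Ideal.map_le_iff_le_comap.mpr fun a ha => by simpa using I.sub_mem ha (hφ a)
  exact le_antisymm (fun a ha => by simpa using I.add_mem (hφ a) (hmap ha)) Ideal.le_comap_map

namespace MvPolynomial

variable {σ R : Type*} [CommRing R]

theorem sub_aeval_mem_of_X_sub_mem {I : Ideal (MvPolynomial σ R)} {s : σ → MvPolynomial σ R}
    (hs : ∀ i, X i - s i ∈ I) (p : MvPolynomial σ R) : p - aeval s p ∈ I := by
  have hmk : (Ideal.Quotient.mkₐ R I).comp (aeval s) = Ideal.Quotient.mkₐ R I :=
    algHom_ext fun i => by simpa using (Ideal.Quotient.eq.mpr (hs i)).symm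
  rw [← Ideal.Quotient.eq]
  simpa using (DFunLike.congr_fun hmk p).symm

theorem irreducible_X_sub_X [IsDomain R] {i j : σ} (hij : i ≠ j) :
    Irreducible (X i - X j : MvPolynomial σ R) := by
  classical
  simpa [sub_eq_add_neg] using
    irreducible_mul_X_add (1 : MvPolynomial σ R) (-X j) i one_ne_zero (by simp)
      (by simpa [vars_neg, vars_X] using hij) isRelPrime_one_left

end MvPolynomial

section TriangleQuadric

variable {R : Type*} [CommRing R]

/-- `(a₂ - a₃) d₁ + (a₃ - a₁) d₂ + (a₁ - a₂) d₃` in the coordinates of `incidenceIdeal`. -/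
noncomputable def triangleQuadric : MvPolynomial (Fin 12) R :=
  (X 1 - X 2) * X 9 + ((X 2 - X 0) * X 10 + (X 0 - X 1) * X 11)

theorem irreducible_triangleQuadric [IsDomain R] :
    Irreducible (triangleQuadric : MvPolynomial (Fin 12) R) := by
  have hcoeff : Irreducible (X 1 - X 2 : MvPolynomial (Fin 12) R) :=
    irreducible_X_sub_X (by decide)
  refine irreducible_mul_X_add _ _ 9 hcoeff.ne_zero (by simp) (fun h => ?_)
    (hcoeff.isRelPrime_iff_not_dvd.mpr fun ⟨q, hq⟩ => ?_)
  · refine absurd ((mem_supported (s := {0, 1, 2, 10, 11})).mp ?_ h) (by simp)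
    refine add_mem (mul_mem (sub_mem ?_ ?_) ?_) (mul_mem (sub_mem ?_ ?_) ?_) <;>
      simp [X_mem_supported]
  · -- at `a₁ = d₃ = 0` and all other coordinates `1` the divisor vanishes, the dividend is `1`
    simpa using congrArg (eval fun i => if i = 0 ∨ i = 11 then 0 else 1) hq

end TriangleQuadric

/-- Solves the first five incidence equations for `b₂, b₃, c₁, c₂, c₃` in terms of the free
coordinates `a₁, a₂, a₃, b₁, d₁, d₂, d₃`, which it fixes. -/
noncomputable def incidenceSubst : Fin 12 → MvPolynomial (Fin 12) ℂ :=
  ![X 0, X 1, X 2, X 3,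
    X 3 + (X 0 - X 1) * X 11,
    X 3 + (X 0 - X 1) * X 11 + (X 1 - X 2) * X 9,
    -(X 3 + (X 0 - X 1) * X 11 + X 1 * X 9),
    -(X 3 + X 0 * X 10),
    -(X 3 + X 0 * X 11),
    X 9, X 10, X 11]

theorem X_sub_incidenceSubst_mem (i : Fin 12) : X i - incidenceSubst i ∈ incidenceIdeal := by
  have rel {p} (hp : p ∈ incidenceIdeal) : Ideal.Quotient.mk incidenceIdeal p = 0 :=
    Ideal.Quotient.eq_zero_iff_mem.mpr hp
  have h₁ := rel (p := X 7 + X 0 * X 10 + X 3) (Ideal.subset_span (by simp))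
  have h₂ := rel (p := X 8 + X 0 * X 11 + X 3) (Ideal.subset_span (by simp))
  have h₃ := rel (p := X 6 + X 1 * X 9 + X 4) (Ideal.subset_span (by simp))
  have h₄ := rel (p := X 8 + X 1 * X 11 + X 4) (Ideal.subset_span (by simp))
  have h₅ := rel (p := X 6 + X 2 * X 9 + X 5) (Ideal.subset_span (by simp))
  simp only [map_add, map_mul] at h₁ h₂ h₃ h₄ h₅
  rw [← Ideal.Quotient.eq]
  fin_cases i <;>
    simp only [Fin.reduceFinMk, incidenceSubst, Matrix.cons_val, map_add, map_sub, map_mul, map_neg]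
  · linear_combination h₄ - h₂
  · linear_combination h₄ - h₂ + h₅ - h₃
  · linear_combination h₃ - h₄ + h₂
  · linear_combination h₁
  · linear_combination h₂

theorem incidenceIdeal_map_eq_span_triangleQuadric :
    incidenceIdeal.map (aeval incidenceSubst) = Ideal.span {triangleQuadric} := by
  have hq : aeval incidenceSubst (X 7 + X 2 * X 10 + X 5 : MvPolynomial (Fin 12) ℂ) =
      triangleQuadric := by
    simp only [map_add, map_mul, aeval_X, incidenceSubst, Matrix.cons_val, triangleQuadric]; ring
  apply le_antisymm
  · refine Ideal.map_le_iff_le_comap.mpr (Ideal.span_le.mpr ?_)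
    rintro g (rfl | rfl | rfl | rfl | rfl | rfl)
    iterate 5
      exact Ideal.mem_span_singleton'.mpr
        ⟨0, by simp only [map_add, map_mul, aeval_X, incidenceSubst, Matrix.cons_val]; ring⟩
    exact hq ▸ Ideal.mem_span_singleton_self _
  · rw [Ideal.span_le, Set.singleton_subset_iff, ← hq]
    exact Ideal.mem_map_of_mem _ (Ideal.subset_span (by simp))

/-- The ideal generated by the six incidence polynomials defining the space of
triangles `I₃,₃` is prime. -/
theorem incidenceIdeal_isPrime : incidenceIdeal.IsPrime := by
  have : (Ideal.span {triangleQuadric} : Ideal (MvPolynomial (Fin 12) ℂ)).IsPrime :=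
    (Ideal.span_singleton_prime irreducible_triangleQuadric.ne_zero).mpr
      irreducible_triangleQuadric.prime
  rw [← Ideal.comap_map_eq_self_of_sub_mem (sub_aeval_mem_of_X_sub_mem X_sub_incidenceSubst_mem),
    incidenceIdeal_map_eq_span_triangleQuadric]
  exact Ideal.comap_isPrime _ _
end

section
/- Let R = ℂ[a₁, a₂, a₃, b₁, b₂, b₃, c₁, c₂, c₃, d₁, d₂, d₃] and let I ⊆ R be the ideal generated by the six incidence polynomials c₂ + a₁d₂ + b₁, c₃ + a₁d₃ + b₁, c₁ + a₂d₁ + b₂, c₃ + a₂d₃ + b₂, c₁ + a₃d₁ + b₃, c₂ + a₃d₂ + b₃. Then the quotient ring R/I is isomorphic, as a ℂ-algebra, to ℂ[a₁, a₂, a₃, d₁, d₂, d₃, c₁]/(f), where f = (a₁ − a₂)(d₂ − d₃) + (a₃ − a₂)(d₁ − d₂). -/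
open MvPolynomial

/-- The polynomial `f = (a₁ − a₂)(d₂ − d₃) + (a₃ − a₂)(d₁ − d₂)` in
`ℂ[a₁, a₂, a₃, d₁, d₂, d₃, c₁]`, with variables of `MvPolynomial (Fin 7) ℂ`
identified as `0 ↦ a₁`, `1 ↦ a₂`, `2 ↦ a₃`, `3 ↦ d₁`, `4 ↦ d₂`, `5 ↦ d₃`, `6 ↦ c₁`. -/
noncomputable def eliminatedPoly : MvPolynomial (Fin 7) ℂ :=
  (X 0 - X 1) * (X 4 - X 5) + (X 2 - X 1) * (X 3 - X 4)

noncomputable def fwdFun : Fin 12 → MvPolynomial (Fin 7) ℂ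
  | 0 => X 0
  | 1 => X 1
  | 2 => X 2
  | 3 => X 2 * X 4 - X 6 - X 2 * X 3 - X 0 * X 4
  | 4 => - X 6 - X 1 * X 3
  | 5 => - X 6 - X 2 * X 3
  | 6 => X 6
  | 7 => X 6 + X 2 * X 3 - X 2 * X 4
  | 8 => X 6 + X 1 * X 3 - X 1 * X 5
  | 9 => X 3
  | 10 => X 4
  | 11 => X 5

noncomputable def bwdFun : Fin 7 → MvPolynomial (Fin 12) ℂ
  | 0 => X 0
  | 1 => X 1
  | 2 => X 2
  | 3 => X 9
  | 4 => X 10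
  | 5 => X 11
  | 6 => X 6

noncomputable def fwd : MvPolynomial (Fin 12) ℂ →ₐ[ℂ] MvPolynomial (Fin 7) ℂ := aeval fwdFun
noncomputable def bwd : MvPolynomial (Fin 7) ℂ →ₐ[ℂ] MvPolynomial (Fin 12) ℂ := aeval bwdFun

lemma ep_mem : eliminatedPoly ∈ Ideal.span {eliminatedPoly} := Ideal.subset_span rfl

lemma fwd_le : incidenceIdeal ≤ (Ideal.span {eliminatedPoly}).comap fwd := by
  rw [incidenceIdeal, Ideal.span_le]
  intro p hp
  simp only [Set.mem_insert_iff, Set.mem_singleton_iff] at hp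
  rcases hp with rfl | rfl | rfl | rfl | rfl | rfl <;>
    · show fwd _ ∈ Ideal.span {eliminatedPoly}
      simp only [fwd, map_add, map_mul, aeval_X, fwdFun]
      first
      | (refine Ideal.mem_span_singleton.2 ⟨0, ?_⟩; rw [eliminatedPoly]; ring1)
      | (refine Ideal.mem_span_singleton.2 ⟨-1, ?_⟩; rw [eliminatedPoly]; ring1)

lemma bwd_le : Ideal.span {eliminatedPoly} ≤ incidenceIdeal.comap bwd := by
  rw [Ideal.span_le]
  rintro p rfl
  show bwd eliminatedPoly ∈ incidenceIdeal
  have : bwd eliminatedPoly =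
      (X 7 + X 0 * X 10 + X 3) - (X 8 + X 0 * X 11 + X 3) - (X 6 + X 1 * X 9 + X 4)
      + (X 8 + X 1 * X 11 + X 4) + (X 6 + X 2 * X 9 + X 5) - (X 7 + X 2 * X 10 + X 5) := by
    simp only [bwd, eliminatedPoly, map_add, map_sub, map_mul, aeval_X, bwdFun]
    ring
  rw [this]
  refine Ideal.sub_mem _ (Ideal.add_mem _ (Ideal.add_mem _ (Ideal.sub_mem _
    (Ideal.sub_mem _ ?_ ?_) ?_) ?_) ?_) ?_ <;> exact Ideal.subset_span (by simp)

set_option maxHeartbeats 2000000 in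
/-- The quotient of `ℂ[a₁,…,d₃]` by the six incidence polynomials is isomorphic, as a
`ℂ`-algebra, to `ℂ[a₁, a₂, a₃, d₁, d₂, d₃, c₁]/(f)` where
`f = (a₁ − a₂)(d₂ − d₃) + (a₃ − a₂)(d₁ − d₂)`. -/
theorem incidence_quotient_iso :
    Nonempty ((MvPolynomial (Fin 12) ℂ ⧸ incidenceIdeal) ≃ₐ[ℂ]
      (MvPolynomial (Fin 7) ℂ ⧸ Ideal.span {eliminatedPoly})) := by
  let Φ := Ideal.quotientMapₐ (Ideal.span {eliminatedPoly}) fwd fwd_le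
  let Ψ := Ideal.quotientMapₐ incidenceIdeal bwd bwd_le
  refine ⟨AlgEquiv.ofAlgHom Φ Ψ ?_ ?_⟩
  · apply Ideal.Quotient.algHom_ext
    apply MvPolynomial.algHom_ext
    intro i
    fin_cases i <;>
      simp [Φ, Ψ, fwd, bwd, fwdFun, bwdFun, Ideal.quotient_map_mkₐ]
  · apply Ideal.Quotient.algHom_ext
    apply MvPolynomial.algHom_ext
    intro i
    have mk0 : ∀ p ∈ incidenceIdeal, Ideal.Quotient.mk incidenceIdeal p = 0 := fun p hp =>
      Ideal.Quotient.eq_zero_iff_mem.2 hp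
    have e1 : Ideal.Quotient.mk incidenceIdeal (X 7) +
        Ideal.Quotient.mk incidenceIdeal (X 0) * Ideal.Quotient.mk incidenceIdeal (X 10) +
        Ideal.Quotient.mk incidenceIdeal (X 3) = 0 := by
      rw [← map_mul, ← map_add, ← map_add]; exact mk0 _ (Ideal.subset_span (by simp))
    have e3 : Ideal.Quotient.mk incidenceIdeal (X 6) +
        Ideal.Quotient.mk incidenceIdeal (X 1) * Ideal.Quotient.mk incidenceIdeal (X 9) +
        Ideal.Quotient.mk incidenceIdeal (X 4) = 0 := by
      rw [← map_mul, ← map_add, ← map_add]; exact mk0 _ (Ideal.subset_span (by simp))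
    have e4 : Ideal.Quotient.mk incidenceIdeal (X 8) +
        Ideal.Quotient.mk incidenceIdeal (X 1) * Ideal.Quotient.mk incidenceIdeal (X 11) +
        Ideal.Quotient.mk incidenceIdeal (X 4) = 0 := by
      rw [← map_mul, ← map_add, ← map_add]; exact mk0 _ (Ideal.subset_span (by simp))
    have e5 : Ideal.Quotient.mk incidenceIdeal (X 6) +
        Ideal.Quotient.mk incidenceIdeal (X 2) * Ideal.Quotient.mk incidenceIdeal (X 9) +
        Ideal.Quotient.mk incidenceIdeal (X 5) = 0 := by
      rw [← map_mul, ← map_add, ← map_add]; exact mk0 _ (Ideal.subset_span (by simp))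
    have e6 : Ideal.Quotient.mk incidenceIdeal (X 7) +
        Ideal.Quotient.mk incidenceIdeal (X 2) * Ideal.Quotient.mk incidenceIdeal (X 10) +
        Ideal.Quotient.mk incidenceIdeal (X 5) = 0 := by
      rw [← map_mul, ← map_add, ← map_add]; exact mk0 _ (Ideal.subset_span (by simp))
    fin_cases i <;>
      simp only [Φ, Ψ, AlgHom.coe_comp, Ideal.Quotient.mkₐ_eq_mk, Function.comp_apply,
        Ideal.quotient_map_mkₐ, AlgHom.coe_id, id_eq, fwd, bwd, fwdFun, bwdFun,
        aeval_X, map_add, map_sub, map_mul, map_neg,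
        show ((⟨3, by norm_num⟩ : Fin 12)) = 3 from rfl,
        show ((⟨4, by norm_num⟩ : Fin 12)) = 4 from rfl,
        show ((⟨5, by norm_num⟩ : Fin 12)) = 5 from rfl,
        show ((⟨7, by norm_num⟩ : Fin 12)) = 7 from rfl,
        show ((⟨8, by norm_num⟩ : Fin 12)) = 8 from rfl]
    · rfl
    · rfl
    · rfl
    · linear_combination e6 - e1 - e5
    · linear_combination -e3
    · linear_combination -e5
    · rfl
    · linear_combination e5 - e6
    · linear_combination e3 - e4
    · rfl
    · rfl
    · rfl
end
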